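/- Let G be a group and H a subgroup of G. With γ(x₁,…,x_{k+1}) = (x₁ x₂^{-1},…, x_k x_{k+1}^{-1}) and γ⋊ : G^{p+1} × H^{q+1} → G^p × H^q given by γ⋊(ĝ, h₁,…,h_{q+1}) = (h_{q+1} γ(ĝ) h_{q+1}^{-1}, γ(h₁,…,h_{q+1})), and with the right action of G ⋊ H on G^{p+1} × H^{q+1} given by (ĝ, ĥ) · (g, h) = (h^{-1} ĝ g h, ĥ h), the fibers of γ⋊ are exactly the orbits of the action: for all x, y ∈ G^{p+1} × H^{q+1}, γ⋊(x) = γ⋊(y) if and only if there exists (g, h) ∈ G ⋊ H with y = x · (g, h). -/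
import Mathlib


/-!
STATEMENT 5. With `γ(x₁,…,x_{k+1}) = (x₁x₂⁻¹,…,x_k x_{k+1}⁻¹)`,
`γ⋊(ĝ, h₁,…,h_{q+1}) = (h_{q+1} γ(ĝ) h_{q+1}⁻¹, γ(h₁,…,h_{q+1}))`, and the right action
`(ĝ, ĥ) · (g, h) = (h⁻¹ ĝ g h, ĥ h)` of `G ⋊ H` on `G^{p+1} × H^{q+1}`, the fibers of `γ⋊`
are exactly the orbits: `γ⋊(x) = γ⋊(y)` iff `y = x · (g, h)` for some `(g, h) ∈ G ⋊ H`. -/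

variable {G : Type*} [Group G] (H : Subgroup G)

/-- `γ : G^{k+1} → G^k`, `γ(x₁,…,x_{k+1}) = (x₁x₂⁻¹,…,x_k x_{k+1}⁻¹)`. -/
def gam {M : Type*} [Group M] (k : ℕ) (x : Fin (k + 1) → M) : Fin k → M :=
  fun j => x j.castSucc * (x j.succ)⁻¹

/-- `γ⋊ : G^{p+1} × H^{q+1} → G^p × H^q`,
`γ⋊(ĝ, h₁,…,h_{q+1}) = (h_{q+1} γ(ĝ) h_{q+1}⁻¹, γ(h₁,…,h_{q+1}))`. -/
def gamSd (p q : ℕ) (x : (Fin (p + 1) → G) × (Fin (q + 1) → H)) :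
    (Fin p → G) × (Fin q → H) :=
  (fun j => (x.2 (Fin.last q) : G) * gam p x.1 j * (x.2 (Fin.last q) : G)⁻¹,
   gam q x.2)

/-- The right action of `G ⋊ H` on `G^{p+1} × H^{q+1}`:
`(ĝ, ĥ) · (g, h) = (h⁻¹ ĝ g h, ĥ h)`, componentwise. -/
def sdSmul (p q : ℕ) (x : (Fin (p + 1) → G) × (Fin (q + 1) → H)) (a : G × H) :
    (Fin (p + 1) → G) × (Fin (q + 1) → H) :=
  (fun k => (a.2 : G)⁻¹ * x.1 k * a.1 * (a.2 : G), fun l => x.2 l * a.2)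

/-- If `γ(x) = γ(y)` pointwise, then `y = x * c` componentwise for
`c = x(last)⁻¹ y(last)`. -/
lemma gam_eq_aux {M : Type*} [Group M] {k : ℕ} {x y : Fin (k + 1) → M}
    (h : gam k x = gam k y) :
    ∀ j, y j = x j * ((x (Fin.last k))⁻¹ * y (Fin.last k)) := by
  intro j
  induction j using Fin.reverseInduction with
  | last => group
  | cast j ih =>
    have hj := congrFun h j
    simp only [gam] at hj
    have h2 : y j.castSucc = x j.castSucc * (x j.succ)⁻¹ * y j.succ := by
      rw [hj]; group
    rw [h2, ih]; group

/-- The fibers of `γ⋊` are exactly the orbits of the right `G ⋊ H`-action: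
`γ⋊(x) = γ⋊(y)` iff there is `(g, h) ∈ G ⋊ H` with `y = x · (g, h)`. -/
theorem gamSd_fibers_eq_orbits (p q : ℕ)
    (x y : (Fin (p + 1) → G) × (Fin (q + 1) → H)) :
    gamSd H p q x = gamSd H p q y ↔ ∃ a : G × H, y = sdSmul H p q x a := by
  constructor
  · intro hxy
    have hfst := congrArg Prod.fst hxy
    have hsnd := congrArg Prod.snd hxy
    simp only [gamSd] at hfst hsnd
    set h : H := (x.2 (Fin.last q))⁻¹ * y.2 (Fin.last q) with hh
    have hy2 : ∀ l, y.2 l = x.2 l * h := gam_eq_aux hsnd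
    have hb : (y.2 (Fin.last q) : G) = (x.2 (Fin.last q) : G) * (h : G) := by
      rw [hy2 (Fin.last q)]; push_cast; ring_nf
    set u : Fin (p + 1) → G := fun k => (h : G)⁻¹ * x.1 k * (h : G) with hu_def
    have hu : gam p u = gam p y.1 := by
      funext j
      have h1 := congrFun hfst j
      have key : gam p y.1 j
          = (y.2 (Fin.last q) : G)⁻¹ *
            ((x.2 (Fin.last q) : G) * gam p x.1 j * (x.2 (Fin.last q) : G)⁻¹) *
            (y.2 (Fin.last q) : G) := by
        rw [h1]; group
      rw [key, hb]
      simp only [gam, hu_def]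
      group
    have hc := gam_eq_aux hu
    refine ⟨⟨(h : G) * ((u (Fin.last p))⁻¹ * y.1 (Fin.last p)) * (h : G)⁻¹, h⟩, ?_⟩
    refine Prod.ext (funext fun k => ?_) (funext fun l => ?_)
    · simp only [sdSmul]
      rw [hc k]
      simp only [hu_def]
      group
    · exact hy2 l
  · rintro ⟨⟨g, h⟩, rfl⟩
    simp only [gamSd, sdSmul]
    refine Prod.ext (funext fun j => ?_) (funext fun j => ?_)
    · simp only [gam]
      push_cast
      group
    · simp only [gam]
      group
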